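/- arXiv:2007.06867 — 2 statements merged into one kernel-verified Lean document; each statement's English description precedes it below -/
import Mathlib

section
/- Let Γ be a profinite graph written as an inverse limit of finite quotient graphs, and let Δ be an abstractly connected subgraph of Γ of finite diameter n (i.e., any two vertices of Δ are joined by a path in Δ of length at most n). Then the topological closure of Δ in Γ has diameter at most n. -/
/-- An (abstract) graph in the sense of Serre/Ribes–Zalesskii: a set `Γ` together with
two "incidence" maps `d0 d1 : Γ → Γ` satisfying `dᵢ ∘ dⱼ = dⱼ`.  When `Γ` carries a
profinite topology and `d0`, `d1` are continuous, this is a profinite graph. -/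
structure GraphStr (Γ : Type*) where
  d0 : Γ → Γ
  d1 : Γ → Γ
  d00 : ∀ x, d0 (d0 x) = d0 x
  d01 : ∀ x, d0 (d1 x) = d1 x
  d10 : ∀ x, d1 (d0 x) = d0 x
  d11 : ∀ x, d1 (d1 x) = d1 x

namespace GraphStr

variable {Γ : Type*} (G : GraphStr Γ)

/-- `x` is a vertex, i.e. lies in `d0(Γ) ∪ d1(Γ)`; equivalently `d0 x = x`. -/
def IsVertex (x : Γ) : Prop := G.d0 x = x

/-- A subset `S` is a subgraph: it is closed under the incidence maps. -/
def IsSubgraph (S : Set Γ) : Prop :=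
  Set.MapsTo G.d0 S S ∧ Set.MapsTo G.d1 S S

/-- There is a path of length at most `n` between `v` and `w` all of whose vertices
and edges lie in `S`. -/
def PathLe (S : Set Γ) (v w : Γ) (n : ℕ) : Prop :=
  ∃ m, m ≤ n ∧ ∃ f : Fin (m + 1) → Γ,
    f 0 = v ∧ f (Fin.last m) = w ∧ (∀ i, f i ∈ S ∧ G.IsVertex (f i)) ∧
    ∀ i : Fin m, ∃ e ∈ S,
      (G.d0 e = f i.castSucc ∧ G.d1 e = f i.succ) ∨
      (G.d0 e = f i.succ ∧ G.d1 e = f i.castSucc)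

/-- `S` is (abstractly) connected of diameter at most `n`: any two vertices of `S`
are joined by a path of length at most `n` inside `S`. -/
def DiamLe (S : Set Γ) (n : ℕ) : Prop :=
  ∀ v ∈ S, ∀ w ∈ S, G.IsVertex v → G.IsVertex w → G.PathLe S v w n

end GraphStr

/-- The set of path data `(f, e)` of length exactly `m` inside `S`. -/
def pathSet {Γ : Type*} (G : GraphStr Γ) (S : Set Γ) (m : ℕ) :
    Set ((Fin (m + 1) → Γ) × (Fin m → Γ)) :=
  {p | (∀ i, p.1 i ∈ S ∧ G.IsVertex (p.1 i)) ∧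
    ∀ i : Fin m, p.2 i ∈ S ∧
      ((G.d0 (p.2 i) = p.1 i.castSucc ∧ G.d1 (p.2 i) = p.1 i.succ) ∨
       (G.d0 (p.2 i) = p.1 i.succ ∧ G.d1 (p.2 i) = p.1 i.castSucc))}

lemma pathSet_closed {Γ : Type*} [TopologicalSpace Γ] [T2Space Γ] (G : GraphStr Γ)
    (h0 : Continuous G.d0) (h1 : Continuous G.d1) {S : Set Γ} (hS : IsClosed S) (m : ℕ) :
    IsClosed (pathSet G S m) := by
  have c1 : ∀ i : Fin (m + 1),
      Continuous fun p : (Fin (m + 1) → Γ) × (Fin m → Γ) => p.1 i :=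
    fun i => (continuous_apply i).comp continuous_fst
  have c2 : ∀ i : Fin m,
      Continuous fun p : (Fin (m + 1) → Γ) × (Fin m → Γ) => p.2 i :=
    fun i => (continuous_apply i).comp continuous_snd
  have heq : pathSet G S m =
      (⋂ i : Fin (m + 1),
        ({p : (Fin (m + 1) → Γ) × (Fin m → Γ) | p.1 i ∈ S} ∩
         {p | G.d0 (p.1 i) = p.1 i})) ∩
      (⋂ i : Fin m,
        ({p : (Fin (m + 1) → Γ) × (Fin m → Γ) | p.2 i ∈ S} ∩
         ({p | G.d0 (p.2 i) = p.1 i.castSucc ∧ G.d1 (p.2 i) = p.1 i.succ} ∪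
          {p | G.d0 (p.2 i) = p.1 i.succ ∧ G.d1 (p.2 i) = p.1 i.castSucc}))) := by
    ext p
    simp [pathSet, GraphStr.IsVertex, Set.mem_iInter, forall_and]
  rw [heq]
  refine IsClosed.inter (isClosed_iInter fun i => ?_) (isClosed_iInter fun i => ?_)
  · exact (hS.preimage (c1 i)).inter (isClosed_eq (h0.comp (c1 i)) (c1 i))
  · refine (hS.preimage (c2 i)).inter (IsClosed.union ?_ ?_)
    · exact (isClosed_eq (h0.comp (c2 i)) (c1 _)).inter
        (isClosed_eq (h1.comp (c2 i)) (c1 _))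
    · exact (isClosed_eq (h0.comp (c2 i)) (c1 _)).inter
        (isClosed_eq (h1.comp (c2 i)) (c1 _))

/-- Lemma 2.1 of the paper.  Let `Γ` be a profinite graph (a compact,
Hausdorff, totally disconnected space with continuous incidence maps; equivalently an
inverse limit of its finite quotient graphs), and let `Δ` be an abstractly connected
subgraph of finite diameter `n`.  Then the topological closure of `Δ` in `Γ` has
diameter at most `n`. -/
theorem closure_diameter_le {Γ : Type*} [TopologicalSpace Γ] [CompactSpace Γ]
    [T2Space Γ] [TotallyDisconnectedSpace Γ]
    (G : GraphStr Γ) (h0 : Continuous G.d0) (h1 : Continuous G.d1)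
    (Δ : Set Γ) (hΔ : G.IsSubgraph Δ) (n : ℕ) (hdiam : G.DiamLe Δ n) :
    G.DiamLe (closure Δ) n := by
  classical
  intro v hv w hw hvv hwv
  set V : Set Γ := Δ ∩ {x | G.IsVertex x} with hV
  set A : Set (Γ × Γ) :=
    ⋃ m ∈ Finset.range (n + 1),
      (fun p : (Fin (m + 1) → Γ) × (Fin m → Γ) => (p.1 0, p.1 (Fin.last m))) ''
        pathSet G (closure Δ) m with hA
  have hAclosed : IsClosed A := by
    refine Set.Finite.isClosed_biUnion (Finset.finite_toSet _) fun m _ => ?_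
    exact (((pathSet_closed G h0 h1 isClosed_closure m).isCompact).image
      (((continuous_apply _).comp continuous_fst).prodMk
        ((continuous_apply _).comp continuous_fst))).isClosed
  have hsub : V ×ˢ V ⊆ A := by
    rintro ⟨a, b⟩ ⟨⟨ha, hav⟩, hb, hbv⟩
    obtain ⟨m, hm, f, hf0, hfl, hfS, hfe⟩ := hdiam a ha b hb hav hbv
    choose e heΔ hee using hfe
    refine Set.mem_iUnion₂.mpr ⟨m, Finset.mem_range.mpr (Nat.lt_succ_of_le hm),
      ⟨(f, e), ⟨fun i => ⟨subset_closure (hfS i).1, (hfS i).2⟩,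
        fun i => ⟨subset_closure (heΔ i), hee i⟩⟩, by simp [hf0, hfl]⟩⟩
  have hvert : ∀ x ∈ closure Δ, G.IsVertex x → x ∈ closure V := by
    intro x hx hxv
    have h1' : G.d0 x ∈ closure (G.d0 '' Δ) :=
      image_closure_subset_closure_image h0 ⟨x, hx, rfl⟩
    have h2' : G.d0 '' Δ ⊆ V := by
      rintro _ ⟨y, hy, rfl⟩
      exact ⟨hΔ.1 hy, G.d00 y⟩
    have := closure_mono h2' h1'
    rwa [hxv] at this
  have hvw : (v, w) ∈ A := by
    have : (v, w) ∈ closure (V ×ˢ V) := by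
      rw [closure_prod_eq]
      exact ⟨hvert v hv hvv, hvert w hw hwv⟩
    exact hAclosed.closure_subset_iff.mpr hsub this
  obtain ⟨m, hm, p, hp, hpe⟩ := Set.mem_iUnion₂.mp hvw
  refine ⟨m, Nat.lt_succ_iff.mp (Finset.mem_range.mp hm), p.1,
    congrArg Prod.fst hpe, congrArg Prod.snd hpe, hp.1,
    fun i => ⟨p.2 i, (hp.2 i).1, (hp.2 i).2⟩⟩
end

section
/- Let G be a pro-p group acting on a pro-p tree T and let U ≤ G be a procyclic subgroup that does not stabilize any edge of T but stabilizes some vertex v. Then the normalizer N_G(U) fixes v; in particular N_G(U) = N_{G_v}(U). -/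
/-- A profinite graph: a topological space `T` (compact, Hausdorff and totally
disconnected in applications) with continuous incidence maps `d0 d1 : T → T`
satisfying `dᵢ ∘ dⱼ = dⱼ`. -/
structure ProfGraph (T : Type*) [TopologicalSpace T] where
  d0 : T → T
  d1 : T → T
  cont0 : Continuous d0
  cont1 : Continuous d1
  d00 : ∀ x, d0 (d0 x) = d0 x
  d01 : ∀ x, d0 (d1 x) = d1 x
  d10 : ∀ x, d1 (d0 x) = d0 x
  d11 : ∀ x, d1 (d1 x) = d1 x

namespace ProfGraph

variable {T : Type*} [TopologicalSpace T] (G : ProfGraph T)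

/-- `x` is a vertex; equivalently `d0 x = x`. -/
def IsVertex (x : T) : Prop := G.d0 x = x

/-- The space of vertices of `G`. -/
abbrev Verts : Type _ := {x : T // G.IsVertex x}

theorem isVertex_d0 (x : T) : G.IsVertex (G.d0 x) := G.d00 x
theorem isVertex_d1 (x : T) : G.IsVertex (G.d1 x) := G.d01 x

/-- The function `T → 𝔽_p` induced by a function on vertices via `d0`. -/
def ed0 (f : G.Verts → ZMod p) : T → ZMod p := fun x => f ⟨G.d0 x, G.isVertex_d0 x⟩

/-- The function `T → 𝔽_p` induced by a function on vertices via `d1`. -/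
def ed1 (f : G.Verts → ZMod p) : T → ZMod p := fun x => f ⟨G.d1 x, G.isVertex_d1 x⟩

/-- `G` is a pro-`p` tree: the sequence of free profinite `𝔽_p`-modules
`0 → 𝔽_p[[E*(T), *]] → 𝔽_p[[V(T)]] → 𝔽_p → 0` (with maps `e ↦ d1(e) − d0(e)` and the
augmentation) is exact.  By the duality between profinite and discrete `𝔽_p`-modules
this is expressed equivalently (and formalized here) by exactness of the dual sequence
of discrete modules of locally constant functions
`0 → 𝔽_p → LC(V(T), 𝔽_p) → {g ∈ LC(T, 𝔽_p) | g vanishes on V(T)} → 0`,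
where the second map sends `f` to `f∘d1 − f∘d0`:
(i) the vertex set is nonempty; (ii) a locally constant function on vertices with
`f∘d0 = f∘d1` is constant ("connectedness"); (iii) every locally constant function on
`T` vanishing on vertices has the form `f∘d1 − f∘d0` ("simple connectedness"). -/
def IsProPTree (p : ℕ) : Prop :=
  Nonempty G.Verts ∧
    (∀ f : G.Verts → ZMod p, IsLocallyConstant f →
      (∀ x : T, G.ed0 f x = G.ed1 f x) → ∃ c, ∀ v, f v = c) ∧
    (∀ g : T → ZMod p, IsLocallyConstant g → (∀ x, G.IsVertex x → g x = 0) →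
      ∃ f : G.Verts → ZMod p, IsLocallyConstant f ∧ ∀ x, g x = G.ed1 f x - G.ed0 f x)

/-- The induced profinite graph structure on a closed subgraph. -/
def restrict (S : Set T) (h0 : Set.MapsTo G.d0 S S) (h1 : Set.MapsTo G.d1 S S) :
    ProfGraph S where
  d0 x := ⟨G.d0 x.1, h0 x.2⟩
  d1 x := ⟨G.d1 x.1, h1 x.2⟩
  cont0 := Continuous.subtype_mk (G.cont0.comp continuous_subtype_val) fun x => h0 x.2
  cont1 := Continuous.subtype_mk (G.cont1.comp continuous_subtype_val) fun x => h1 x.2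
  d00 x := Subtype.ext (G.d00 x.1)
  d01 x := Subtype.ext (G.d01 x.1)
  d10 x := Subtype.ext (G.d10 x.1)
  d11 x := Subtype.ext (G.d11 x.1)

/-- `S` is a pro-`p` subtree of `T`: a closed subset, closed under the incidence maps,
which is a pro-`p` tree for the induced structure. -/
def IsSubtree (p : ℕ) (S : Set T) : Prop :=
  IsClosed S ∧ ∃ (h0 : Set.MapsTo G.d0 S S) (h1 : Set.MapsTo G.d1 S S),
    (G.restrict S h0 h1).IsProPTree p

/-- The geodesic `[v, w]`: the smallest pro-`p` subtree of `T` containing `v` and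
`w`. -/
def geodesic (p : ℕ) (v w : T) : Set T :=
  ⋂₀ {S : Set T | G.IsSubtree p S ∧ v ∈ S ∧ w ∈ S}

end ProfGraph

/-!
Suppose `n` normalizes `U`, the closure of `⟨u⟩`, but `w := n • v ≠ v`. Then `U` fixes `w` as
well, so the indicator `f : T → 𝔽_p` of a `U`-invariant clopen set separates `v` from `w`. On the
compact set `K` of edges with `f (d₁ e) ≠ f (d₀ e)` the element `u` moves every point, so some open
normal subgroup `V` satisfies `u • x ∉ V • x` on `K`; since `Γ / V` is a `p`-group, `u ^ k`
maps no `x ∈ K` into `V • x` unless `p ∣ k`. From this one builds a locally constant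
`L : T → 𝔽_p` with `L (u • x) = L x + 1` on `K`. By simple connectedness, the restriction of
`f ∘ d₁ - f ∘ d₀` to `{L = 0}` is `h ∘ d₁ - h ∘ d₀`, and then `f - ∑_{i < p} h ∘ u⁻ⁱ` is constant
along edges; at the `u`-fixed vertices `v`, `w` the correction is `p • h = 0`, so connectedness
forces `f v = f w`, a contradiction.
-/

open MulAction
open scoped Pointwise

theorem Subgroup.mem_of_zpow_mem_of_isCoprime {G : Type*} [Group G] {H : Subgroup G} {g : G}
    {k n : ℤ} (hk : g ^ k ∈ H) (hn : g ^ n ∈ H) (hkn : IsCoprime k n) : g ∈ H := by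
  obtain ⟨a, b, hab⟩ := hkn
  have hg : g = (g ^ k) ^ a * (g ^ n) ^ b := by
    rw [← zpow_mul, ← zpow_mul, ← zpow_add, mul_comm k, mul_comm n, hab, zpow_one]
  rw [hg]
  exact H.mul_mem (H.zpow_mem hk a) (H.zpow_mem hn b)

theorem MulAction.mem_stabilizer_orbit_iff {G X : Type*} [Group G] [MulAction G X]
    {N : Subgroup G} [N.Normal] {x : X} {g : G} :
    g ∈ stabilizer G (orbit N x) ↔ g • x ∈ orbit N x := by
  rw [mem_stabilizer_iff, smul_orbit_eq_orbit_smul, orbit_eq_iff]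

theorem smul_smul_eq_of_mem_normalizer {G X : Type*} [Group G] [MulAction G X] {U : Set G}
    {n : G} (hn : n ∈ Subgroup.normalizer U) {v : X} (hv : ∀ s ∈ U, s • v = v) :
    ∀ s ∈ U, s • n • v = n • v := fun s hs =>
  calc s • n • v = n • (n⁻¹ * s * n) • v := by rw [smul_smul, smul_smul]; congr 1; group
    _ = n • v := by rw [hv _ ((Subgroup.mem_set_normalizer_iff''.1 hn s).1 hs)]

theorem isClopen_of_forall_mul_mem {G : Type*} [Group G] [TopologicalSpace G] [ContinuousMul G]
    {V : Subgroup G} (hV : IsOpen (V : Set G)) {D : Set G}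
    (hD : ∀ γ ∈ D, ∀ s ∈ V, γ * s ∈ D) : IsClopen D := by
  have saturated : ∀ E : Set G, (∀ γ ∈ E, ∀ s ∈ V, γ * s ∈ E) → E * V = E := fun E hE =>
    (Set.mul_subset_iff.2 hE).antisymm (Set.subset_mul_left E V.one_mem)
  have hDc : ∀ γ ∈ Dᶜ, ∀ s ∈ V, γ * s ∈ Dᶜ := fun γ hγ s hs hγs =>
    hγ (by simpa using hD _ hγs _ (V.inv_mem hs))
  refine ⟨?_, ?_⟩
  · rw [← isOpen_compl_iff, ← saturated _ hDc]
    exact hV.mul_left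
  · rw [← saturated _ hD]
    exact hV.mul_left

section Action

variable {Γ X : Type*} [Group Γ] [TopologicalSpace Γ] [TopologicalSpace X] [MulAction Γ X]
  [ContinuousSMul Γ X]

theorem isClosed_stabilizer [T2Space X] (x : X) : IsClosed (stabilizer Γ x : Set Γ) :=
  isClosed_eq (continuous_id.smul continuous_const) continuous_const

theorem smul_eq_self_of_mem_topologicalClosure_zpowers [IsTopologicalGroup Γ] [T2Space X]
    {u : Γ} {x : X} (hux : u • x = x) {s : Γ}
    (hs : s ∈ (Subgroup.zpowers u).topologicalClosure) : s • x = x :=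
  Subgroup.topologicalClosure_minimal _ (Subgroup.zpowers_le.2 hux) (isClosed_stabilizer x) hs

theorem exists_isClopen_forall_smul_notMem [CompactSpace X] [T2Space X]
    [TotallyDisconnectedSpace X] {B : Set Γ} (hB : IsCompact B) {x : X}
    (hx : ∀ γ ∈ B, γ • x ≠ x) : ∃ C : Set X, IsClopen C ∧ x ∈ C ∧ ∀ γ ∈ B, ∀ c ∈ C, γ • c ∉ C := by
  set R : Set (X × X) := (fun q : Γ × X => (q.1 • q.2, q.2)) '' (B ×ˢ Set.univ)
  have hR : IsClosed R :=
    ((hB.prod isCompact_univ).image (continuous_smul.prodMk continuous_snd)).isClosed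
  have hxR : (x, x) ∉ R := by
    rintro ⟨⟨γ, y⟩, ⟨hγ, -⟩, hq⟩
    obtain ⟨hγy, rfl⟩ := Prod.ext_iff.1 hq
    exact hx γ hγ hγy
  obtain ⟨A₁, A₂, hA₁, hA₂, hxA₁, hxA₂, hA⟩ := isOpen_prod_iff.1 hR.isOpen_compl x x hxR
  obtain ⟨C, hC, hxC, hCA⟩ := compact_exists_isClopen_in_isOpen (hA₁.inter hA₂) ⟨hxA₁, hxA₂⟩
  refine ⟨C, hC, hxC, fun γ hγ c hc hγc => ?_⟩
  exact hA ⟨(hCA hγc).1, (hCA hc).2⟩ ⟨(γ, c), ⟨hγ, trivial⟩, rfl⟩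

theorem exists_isClopen_smul_mem_iff [CompactSpace X] [T2Space X] [TotallyDisconnectedSpace X]
    {U : Subgroup Γ} (hU : IsCompact (U : Set Γ)) {v w : X} (hvw : v ≠ w)
    (hw : ∀ s ∈ U, s • w = w) :
    ∃ W : Set X, IsClopen W ∧ v ∈ W ∧ w ∉ W ∧ ∀ s ∈ U, ∀ x, s • x ∈ W ↔ x ∈ W := by
  obtain ⟨C, hC, hvC, hwC⟩ := exists_isClopen_of_totally_separated hvw
  have smul_mem : ∀ s ∈ U, ∀ x ∈ (U : Set Γ) • C, s • x ∈ (U : Set Γ) • C := by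
    rintro s hs _ ⟨a, ha, c, hc, rfl⟩
    exact ⟨s * a, U.mul_mem hs ha, c, hc, mul_smul s a c⟩
  refine ⟨(U : Set Γ) • C, ⟨(hU.smul_set hC.isClosed.isCompact).isClosed, hC.isOpen.smul_left⟩,
    ⟨1, U.one_mem, v, hvC, one_smul Γ v⟩, ?_, fun s hs x => ⟨fun h => ?_, smul_mem s hs x⟩⟩
  · rintro ⟨a, ha, c, hc, hac⟩
    change a • c = w at hac
    rw [smul_eq_iff_eq_inv_smul, hw _ (U.inv_mem ha)] at hac
    exact hwC (hac ▸ hc)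
  · simpa using smul_mem s⁻¹ (U.inv_mem hs) _ h

theorem exists_openNormalSubgroup_smul_notMem_orbit [IsTopologicalGroup Γ] [CompactSpace Γ]
    [TotallyDisconnectedSpace Γ] [T2Space X] {K : Set X} (hK : IsCompact K) {u : Γ}
    (hu : ∀ x ∈ K, u • x ≠ x) :
    ∃ V : OpenNormalSubgroup Γ, ∀ x ∈ K, u • x ∉ orbit V.toSubgroup x := by
  set Z : Set Γ := Prod.fst '' ((Set.univ ×ˢ K) ∩ {q : Γ × X | q.1 • q.2 = u • q.2})
  have hZ : IsClosed Z :=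
    (((isCompact_univ.prod hK).inter_right (isClosed_eq continuous_smul
      ((continuous_const_smul u).comp continuous_snd))).image continuous_fst).isClosed
  have h1Z : (1 : Γ) ∉ Z := by
    rintro ⟨⟨γ, x⟩, ⟨⟨-, hx⟩, hγx⟩, rfl⟩
    exact hu x hx (by simpa using hγx.symm)
  obtain ⟨V, hV⟩ := ProfiniteGrp.exist_openNormalSubgroup_sub_open_nhds_of_one hZ.isOpen_compl h1Z
  exact ⟨V, fun x hx ⟨s, hsx⟩ => hV s.2 ⟨(s, x), ⟨⟨trivial, hx⟩, hsx⟩, rfl⟩⟩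

end Action

section Shift

variable {Γ X : Type*} [TopologicalSpace X]

def HasShiftOn [SMul Γ X] (u : Γ) (p : ℕ) (S : Set X) : Prop :=
  ∃ L : X → ZMod p, Continuous L ∧ ∀ x ∈ S, L (u • x) = L x + 1

variable [SMul Γ X] {u : Γ} {p : ℕ} {S S' : Set X}

theorem HasShiftOn.mono (h : HasShiftOn u p S) (hS' : S' ⊆ S) : HasShiftOn u p S' :=
  let ⟨L, hL, hLS⟩ := h
  ⟨L, hL, fun x hx => hLS x (hS' hx)⟩

theorem HasShiftOn.union (h : HasShiftOn u p S) (h' : HasShiftOn u p S') (hS : IsClopen S)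
    (hSu : ∀ x, u • x ∈ S ↔ x ∈ S) : HasShiftOn u p (S ∪ S') := by
  classical
  obtain ⟨L, hL, hLS⟩ := h
  obtain ⟨L', hL', hLS'⟩ := h'
  refine ⟨S.piecewise L L', hL.piecewise (by simp [hS.frontier_eq]) hL', fun x hx => ?_⟩
  by_cases hxS : x ∈ S
  · rw [Set.piecewise_eq_of_mem _ _ _ ((hSu x).2 hxS), Set.piecewise_eq_of_mem _ _ _ hxS,
      hLS x hxS]
  · rw [Set.piecewise_eq_of_notMem _ _ _ (mt (hSu x).1 hxS), Set.piecewise_eq_of_notMem _ _ _ hxS,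
      hLS' x (hx.resolve_left hxS)]

theorem hasShiftOn_biUnion {ι : Type*} (t : Finset ι) {S : ι → Set X}
    (h : ∀ i, HasShiftOn u p (S i)) (hS : ∀ i, IsClopen (S i))
    (hSu : ∀ i x, u • x ∈ S i ↔ x ∈ S i) : HasShiftOn u p (⋃ i ∈ t, S i) := by
  classical
  induction t using Finset.induction_on with
  | empty => exact ⟨0, continuous_const, by simp⟩
  | insert i t _ ih =>
    rw [Finset.set_biUnion_insert]
    exact (h i).union ih (hS i) (hSu i)

end Shift

section DegSet

variable {Γ : Type*} [Group Γ]

def degSet (u : Γ) (V : Subgroup Γ) (p : ℕ) (i : ZMod p) : Set Γ :=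
  {γ | ∃ k : ℤ, (k : ZMod p) = i ∧ ∃ s ∈ V, u ^ k * s = γ}

variable {u : Γ} {V : Subgroup Γ} {p : ℕ} {i j : ZMod p} {γ δ : Γ}

theorem zpow_mul_mem_degSet {k : ℤ} {s : Γ} (hs : s ∈ V) : u ^ k * s ∈ degSet u V p k :=
  ⟨k, rfl, s, hs, rfl⟩

theorem zpow_mul_mem_degSet_add (hγ : γ ∈ degSet u V p i) (k : ℤ) :
    u ^ k * γ ∈ degSet u V p (k + i) := by
  obtain ⟨l, rfl, s, hs, rfl⟩ := hγ
  rw [← mul_assoc, ← zpow_add, ← Int.cast_add]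
  exact zpow_mul_mem_degSet hs

theorem mul_mem_degSet (hγ : γ ∈ degSet u V p i) {s : Γ} (hs : s ∈ V) :
    γ * s ∈ degSet u V p i := by
  obtain ⟨k, hk, t, ht, rfl⟩ := hγ
  exact ⟨k, hk, t * s, V.mul_mem ht hs, (mul_assoc _ _ _).symm⟩

theorem inv_mul_mem_degSet (hV : V.Normal) (hγ : γ ∈ degSet u V p i)
    (hδ : δ ∈ degSet u V p j) : δ⁻¹ * γ ∈ degSet u V p (i - j) := by
  obtain ⟨k, rfl, s, hs, rfl⟩ := hγ
  obtain ⟨l, rfl, t, ht, rfl⟩ := hδ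
  have hconj : u ^ (l - k) * t⁻¹ * (u ^ (l - k))⁻¹ * s ∈ V :=
    V.mul_mem (hV.conj_mem _ (V.inv_mem ht) _) hs
  rw [← Int.cast_sub]
  convert zpow_mul_mem_degSet (p := p) hconj using 1
  group

theorem isClopen_degSet [TopologicalSpace Γ] [ContinuousMul Γ]
    (hV : IsOpen (V : Set Γ)) (i : ZMod p) : IsClopen (degSet u V p i) :=
  isClopen_of_forall_mul_mem hV fun _ hγ _ hs => mul_mem_degSet hγ hs

end DegSet

section DegSetAction

variable {Γ X : Type*} [Group Γ] [MulAction Γ X]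
  {u : Γ} {V : Subgroup Γ} {p : ℕ} {i j : ZMod p} {C : Set X} {x : X}

/-- The sets `degSet u V p i` may overlap; on `degSet u V p i • C` with `C` separated, the degree
`i` is nevertheless determined by the point (`eq_of_mem_degSet_smul`). -/
def IsDegSeparated (u : Γ) (V : Subgroup Γ) (p : ℕ) (C : Set X) : Prop :=
  ∀ i, ∀ γ ∈ degSet u V p i, ∀ c ∈ C, γ • c ∈ C → i = 0

theorem eq_of_mem_degSet_smul (hV : V.Normal) (hC : IsDegSeparated u V p C)
    (hi : x ∈ degSet u V p i • C) (hj : x ∈ degSet u V p j • C) : i = j := by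
  obtain ⟨γ, hγ, c, hc, rfl⟩ := hi
  obtain ⟨δ, hδ, d, hd, hδd⟩ := hj
  have hc' : (δ⁻¹ * γ) • c = d := by
    change δ • d = γ • c at hδd
    rw [mul_smul, ← hδd, inv_smul_smul]
  exact sub_eq_zero.1 (hC _ _ (inv_mul_mem_degSet hV hγ hδ) c hc (hc' ▸ hd))

theorem zpow_smul_mem_degSet_smul (hx : x ∈ degSet u V p i • C) (k : ℤ) :
    u ^ k • x ∈ degSet u V p (k + i) • C := by
  obtain ⟨γ, hγ, c, hc, rfl⟩ := hx
  exact ⟨u ^ k * γ, zpow_mul_mem_degSet_add hγ k, c, hc, mul_smul _ _ _⟩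

theorem smul_mem_iUnion_degSet_smul_iff :
    u • x ∈ ⋃ i, degSet u V p i • C ↔ x ∈ ⋃ i, degSet u V p i • C := by
  simp only [Set.mem_iUnion]
  constructor
  · rintro ⟨i, hi⟩
    exact ⟨_, by simpa using zpow_smul_mem_degSet_smul hi (-1)⟩
  · rintro ⟨i, hi⟩
    exact ⟨_, by simpa using zpow_smul_mem_degSet_smul hi 1⟩

theorem eq_zero_of_smul_notMem_orbit [hp : Fact p.Prime] (hV : V.Normal) {m : ℕ}
    (hm : u ^ p ^ m ∈ V) (hx : u • x ∉ orbit V x) {γ : Γ} (hγ : γ ∈ degSet u V p i)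
    (hγx : γ • x = x) : i = 0 := by
  obtain ⟨k, rfl, s, hs, rfl⟩ := hγ
  by_contra hk
  rw [ZMod.intCast_zmod_eq_zero_iff_dvd] at hk
  apply hx
  rw [← mem_stabilizer_orbit_iff]
  have hinv : (u ^ k)⁻¹ ∈ stabilizer Γ (orbit V x) := by
    have hsx : (u ^ k)⁻¹ • x = s • x := by rw [inv_smul_eq_iff, ← mul_smul, hγx]
    rw [mem_stabilizer_orbit_iff, hsx]
    exact ⟨⟨s, hs⟩, rfl⟩
  refine Subgroup.mem_of_zpow_mem_of_isCoprime (inv_mem_iff.1 hinv) (n := (p : ℤ) ^ m) ?_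
    ((Nat.prime_iff_prime_int.mp hp.out).coprime_iff_not_dvd.2 hk).pow_left.symm
  rw [mem_stabilizer_orbit_iff]
  exact ⟨⟨_, by exact_mod_cast hm⟩, rfl⟩

variable [TopologicalSpace Γ] [ContinuousMul Γ] [CompactSpace Γ]
  [TopologicalSpace X] [ContinuousSMul Γ X] [CompactSpace X] [T2Space X]

theorem exists_isClopen_isDegSeparated [TotallyDisconnectedSpace X] (hV : IsOpen (V : Set Γ))
    (hx : ∀ i, ∀ γ ∈ degSet u V p i, γ • x = x → i = 0) :
    ∃ C : Set X, IsClopen C ∧ x ∈ C ∧ IsDegSeparated u V p C := by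
  set B := {γ : Γ | ∃ i ≠ 0, γ ∈ degSet u V p i}
  have hB : IsClopen B := isClopen_of_forall_mul_mem hV fun _ ⟨i, hi, hγ⟩ _ hs =>
    ⟨i, hi, mul_mem_degSet hγ hs⟩
  obtain ⟨C, hC, hxC, hCB⟩ := exists_isClopen_forall_smul_notMem hB.isClosed.isCompact
    fun γ ⟨i, hi, hγ⟩ h => hi (hx i γ hγ h)
  exact ⟨C, hC, hxC, fun i γ hγ c hc hγc => by_contra fun hi => hCB γ ⟨i, hi, hγ⟩ c hc hγc⟩

theorem isClopen_degSet_smul (hV : IsOpen (V : Set Γ)) (hC : IsClopen C) (i : ZMod p) :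
    IsClopen (degSet u V p i • C) :=
  ⟨((isClopen_degSet hV i).isClosed.isCompact.smul_set hC.isClosed.isCompact).isClosed,
    hC.isOpen.smul_left⟩

theorem hasShiftOn_iUnion_degSet_smul [NeZero p] (hVo : IsOpen (V : Set Γ)) (hVn : V.Normal)
    (hC : IsClopen C) (hCsep : IsDegSeparated u V p C) :
    HasShiftOn u p (⋃ i, degSet u V p i • C) := by
  classical
  have hL : ∀ x i, x ∈ degSet u V p i • C →
      ∑ j, (degSet u V p j • C).indicator (fun _ => j) x = i := fun x i hx => by
    rw [Finset.sum_eq_single i (fun j _ hji => Set.indicator_of_notMem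
      (fun hj => hji (eq_of_mem_degSet_smul hVn hCsep hj hx)) _) (by simp),
      Set.indicator_of_mem hx]
  refine ⟨fun x => ∑ j, (degSet u V p j • C).indicator (fun _ => j) x,
    continuous_finsetSum _ fun i _ =>
      (isClopen_degSet_smul hVo hC i).continuous_indicator continuous_const,
    fun x hx => ?_⟩
  obtain ⟨i, hi⟩ := Set.mem_iUnion.1 hx
  have hux := zpow_smul_mem_degSet_smul hi 1
  rw [zpow_one, Int.cast_one] at hux
  beta_reduce
  rw [hL _ _ hux, hL _ _ hi, add_comm]

theorem hasShiftOn_of_forall_degSet [NeZero p] [TotallyDisconnectedSpace X]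
    (hVo : IsOpen (V : Set Γ)) (hVn : V.Normal) {K : Set X} (hK : IsCompact K)
    (hfree : ∀ x ∈ K, ∀ i, ∀ γ ∈ degSet u V p i, γ • x = x → i = 0) : HasShiftOn u p K := by
  choose C hC hxC hCsep using fun x : K => exists_isClopen_isDegSeparated hVo (hfree x x.2)
  obtain ⟨t, ht⟩ := hK.elim_finite_subcover C (fun x => (hC x).isOpen)
    fun x hx => Set.mem_iUnion.2 ⟨⟨x, hx⟩, hxC _⟩
  have hCsat : ∀ x, C x ⊆ ⋃ i, degSet u V p i • C x := fun x c hc =>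
    Set.mem_iUnion.2 ⟨0, 1, ⟨0, by simp, 1, V.one_mem, by simp⟩, c, hc, one_smul _ _⟩
  refine (hasShiftOn_biUnion t (fun x => hasShiftOn_iUnion_degSet_smul hVo hVn (hC x) (hCsep x))
    (fun x => isClopen_iUnion_of_finite fun i => isClopen_degSet_smul hVo (hC x) i)
    fun x _ => smul_mem_iUnion_degSet_smul_iff).mono (ht.trans ?_)
  exact Set.iUnion₂_mono fun x _ => hCsat x

end DegSetAction

theorem sum_ite_inv_pow_smul_eq {Γ T M : Type*} [Group Γ] [MulAction Γ T] [AddCommMonoid M]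
    {p : ℕ} [NeZero p] {u : Γ} {g : T → M} (hg : ∀ x, g (u • x) = g x) {L : T → ZMod p}
    (hL : ∀ x, g x ≠ 0 → L (u • x) = L x + 1) (x : T) :
    ∑ a : ZMod p, (if L ((u ^ a.val)⁻¹ • x) = 0 then g ((u ^ a.val)⁻¹ • x) else 0) = g x := by
  have hg_pow : ∀ (n : ℕ) (y : T), g (u ^ n • y) = g y := fun n => by
    induction n with
    | zero => simp
    | succ n ih => intro y; rw [pow_succ, mul_smul, ih, hg]
  have hg_inv : ∀ n : ℕ, g ((u ^ n)⁻¹ • x) = g x := fun n => by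
    rw [← hg_pow n, smul_inv_smul]
  by_cases hx : g x = 0
  · simp [hg_inv, hx]
  have hL_inv : ∀ n : ℕ, L ((u ^ n)⁻¹ • x) = L x - n := fun n => by
    induction n with
    | zero => simp
    | succ n ih =>
      have hstep := hL ((u ^ (n + 1))⁻¹ • x) (by rwa [hg_inv])
      have hu : u • (u ^ (n + 1))⁻¹ • x = (u ^ n)⁻¹ • x := by
        rw [smul_smul, pow_succ, mul_inv_rev, mul_inv_cancel_left]
      rw [hu, ih] at hstep
      push_cast
      linear_combination -hstep
  simp [hL_inv, hg_inv, sub_eq_zero]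

namespace ProfGraph

variable {T : Type*} [TopologicalSpace T] {G : ProfGraph T}

theorem IsVertex.d1_eq {x : T} (hx : G.IsVertex x) : G.d1 x = x := by
  rw [← hx]
  exact G.d10 x

theorem IsVertex.smul {Γ : Type*} [SMul Γ T] (hd0 : ∀ (g : Γ) (x : T), G.d0 (g • x) = g • G.d0 x)
    (γ : Γ) {x : T} (hx : G.IsVertex x) : G.IsVertex (γ • x) := by
  rw [IsVertex, hd0, hx]

theorem IsProPTree.apply_eq_of_hasShiftOn {p : ℕ} [NeZero p] (htree : G.IsProPTree p)
    {Γ : Type*} [Group Γ] [MulAction Γ T] [ContinuousConstSMul Γ T]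
    (hd0 : ∀ (g : Γ) (x : T), G.d0 (g • x) = g • G.d0 x)
    (hd1 : ∀ (g : Γ) (x : T), G.d1 (g • x) = g • G.d1 x)
    {u : Γ} {f : T → ZMod p} (hf : Continuous f) (hfu : ∀ x, f (u • x) = f x)
    (hL : HasShiftOn u p {x | f (G.d1 x) ≠ f (G.d0 x)})
    {v w : T} (hv : G.IsVertex v) (hw : G.IsVertex w) (huv : u • v = v) (huw : u • w = w) :
    f v = f w := by
  classical
  obtain ⟨L, hLc, hLu⟩ := hL
  set g : T → ZMod p := fun x => f (G.d1 x) - f (G.d0 x)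
  have hgu : ∀ x, g (u • x) = g x := fun x => by simp only [g, hd0, hd1, hfu]
  set g' : T → ZMod p := fun x => if L x = 0 then g x else 0
  have hL0 : IsClopen {x | L x = 0} := (isClopen_discrete {0}).preimage hLc
  have hg' : Continuous g' :=
    ((hf.comp G.cont1).sub (hf.comp G.cont0)).if (by simp [hL0.frontier_eq]) continuous_const
  obtain ⟨h, hh, hgh⟩ := htree.2.2 g' ((IsLocallyConstant.iff_continuous _).2 hg')
    fun x hx => by simp [g', g, hx.d1_eq, show G.d0 x = x from hx]
  have hh0 : Continuous (G.ed0 h) := hh.continuous.comp (G.cont0.subtype_mk _)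
  -- `G.ed0 h` extends `h` from the vertices to all of `T`
  set F : T → ZMod p := fun y => f y - ∑ a : ZMod p, G.ed0 h ((u ^ a.val)⁻¹ • y)
  have hF : Continuous F := hf.sub <| continuous_finsetSum _ fun a _ =>
    hh0.comp (continuous_const_smul _)
  have hFfix : ∀ y, u • y = y → F y = f y := fun y hy => by
    have hpow : ∀ n : ℕ, (u ^ n)⁻¹ • y = y := fun n =>
      (stabilizer Γ y).inv_mem ((stabilizer Γ y).pow_mem hy n)
    simp [F, hpow]
  have hFe : ∀ x, F (G.d1 x) = F (G.d0 x) := fun x => by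
    have hd : ∀ γ : Γ, G.ed0 h (γ • G.d1 x) - G.ed0 h (γ • G.d0 x) = g' (γ • x) := fun γ => by
      rw [hgh, ed0, ed0, ed1, ed0]
      congr 3 <;> simp only [hd0, hd1, G.d00, G.d01]
    have hsum : ∑ a : ZMod p, g' ((u ^ a.val)⁻¹ • x) = g x :=
      sum_ite_inv_pow_smul_eq hgu (fun y hy => hLu y (sub_ne_zero.1 hy)) x
    simp only [← hd, Finset.sum_sub_distrib, g] at hsum
    simp only [F]
    linear_combination -hsum
  obtain ⟨c, hc⟩ := htree.2.1 (fun y => F y)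
    ((IsLocallyConstant.iff_continuous _).2 (hF.comp continuous_subtype_val)) fun x => (hFe x).symm
  rw [← hFfix v huv, ← hFfix w huw]
  exact (hc ⟨v, hv⟩).trans (hc ⟨w, hw⟩).symm

theorem IsProPTree.apply_eq_of_forall_smul_ne {p : ℕ} [Fact p.Prime] [CompactSpace T] [T2Space T]
    [TotallyDisconnectedSpace T] (htree : G.IsProPTree p) {Γ : Type*} [Group Γ]
    [TopologicalSpace Γ] [IsTopologicalGroup Γ] [CompactSpace Γ] [TotallyDisconnectedSpace Γ]
    (hproP : ∀ V : OpenNormalSubgroup Γ, IsPGroup p (Γ ⧸ V.toSubgroup))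
    [MulAction Γ T] [ContinuousSMul Γ T]
    (hd0 : ∀ (g : Γ) (x : T), G.d0 (g • x) = g • G.d0 x)
    (hd1 : ∀ (g : Γ) (x : T), G.d1 (g • x) = g • G.d1 x)
    {u : Γ} {f : T → ZMod p} (hf : Continuous f) (hfu : ∀ x, f (u • x) = f x)
    (hmove : ∀ x, f (G.d1 x) ≠ f (G.d0 x) → u • x ≠ x)
    {v w : T} (hv : G.IsVertex v) (hw : G.IsVertex w) (huv : u • v = v) (huw : u • w = w) :
    f v = f w := by
  set K := {x | f (G.d1 x) ≠ f (G.d0 x)}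
  have hK : IsCompact K := ((isClosed_discrete {q : ZMod p × ZMod p | q.1 ≠ q.2}).preimage
    ((hf.comp G.cont1).prodMk (hf.comp G.cont0))).isCompact
  obtain ⟨V, hV⟩ := exists_openNormalSubgroup_smul_notMem_orbit hK hmove
  obtain ⟨m, hm⟩ := hproP V u
  have humV : u ^ p ^ m ∈ V.toSubgroup := (QuotientGroup.eq_one_iff _).1 hm
  have hL : HasShiftOn u p K := hasShiftOn_of_forall_degSet V.isOpen V.isNormal' hK
    fun x hx _ _ hγ hγx => eq_zero_of_smul_notMem_orbit V.isNormal' humV (hV x hx) hγ hγx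
  exact htree.apply_eq_of_hasShiftOn hd0 hd1 hf hfu hL hv hw huv huw

end ProfGraph

theorem normalizer_fixes_vertex_general (p : ℕ) [Fact p.Prime]
    {T : Type} [TopologicalSpace T] [CompactSpace T] [T2Space T]
    [TotallyDisconnectedSpace T]
    (G : ProfGraph T) (htree : G.IsProPTree p)
    (Γ : Type) [Group Γ] [TopologicalSpace Γ] [IsTopologicalGroup Γ]
    [CompactSpace Γ] [TotallyDisconnectedSpace Γ]
    (hproP : ∀ V : OpenNormalSubgroup Γ, IsPGroup p (Γ ⧸ V.toSubgroup))
    [MulAction Γ T] (hcont : Continuous fun q : Γ × T => q.1 • q.2)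
    (hd0 : ∀ (g : Γ) (x : T), G.d0 (g • x) = g • G.d0 x)
    (hd1 : ∀ (g : Γ) (x : T), G.d1 (g • x) = g • G.d1 x)
    (U : Subgroup Γ)
    (hU : ∃ u : Γ, U = (Subgroup.zpowers u).topologicalClosure)
    (hnoedge : ∀ e : T, ¬ G.IsVertex e → ∃ u ∈ U, u • e ≠ e)
    (v : T) (hv : G.IsVertex v) (hfixv : ∀ u ∈ U, u • v = v) :
    ∀ n ∈ Subgroup.normalizer (U : Set Γ), n • v = v := by
  intro n hn
  by_contra hnv
  obtain ⟨u, rfl⟩ := hU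
  have : ContinuousSMul Γ T := ⟨hcont⟩
  have hu : u ∈ (Subgroup.zpowers u).topologicalClosure :=
    Subgroup.le_topologicalClosure _ (Subgroup.mem_zpowers u)
  have hfixnv := smul_smul_eq_of_mem_normalizer hn hfixv
  obtain ⟨W, hW, hvW, hnvW, hWu⟩ := exists_isClopen_smul_mem_iff
    (Subgroup.isClosed_topologicalClosure _).isCompact (Ne.symm hnv) hfixnv
  set f : T → ZMod p := W.indicator 1
  have hfu : ∀ x, f (u • x) = f x := fun x => by
    by_cases hx : x ∈ W <;> simp [f, hx, hWu u hu x]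
  have hmove : ∀ x, f (G.d1 x) ≠ f (G.d0 x) → u • x ≠ x := fun x hx hux => by
    obtain ⟨s, hs, hsx⟩ := hnoedge x fun hxv => hx (by rw [hxv.d1_eq, show G.d0 x = x from hxv])
    exact hsx (smul_eq_self_of_mem_topologicalClosure_zpowers hux hs)
  have hfv := htree.apply_eq_of_forall_smul_ne hproP hd0 hd1
    (hW.continuous_indicator continuous_const) hfu hmove hv (hv.smul hd0 n) (hfixv u hu)
    (hfixnv u hu)
  rw [Set.indicator_of_mem hvW, Set.indicator_of_notMem hnvW] at hfv
  exact one_ne_zero hfv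

/-- Case 1 of Proposition 7.2 of the paper.  Let `G` be a pro-`p`
group acting on a pro-`p` tree `T` and let `U ≤ G` be a procyclic subgroup that does
not stabilize any edge of `T` but stabilizes some vertex `v`.  Then the normalizer
`N_G(U)` fixes `v` (in particular `N_G(U) = N_{G_v}(U)`). -/
theorem normalizer_fixes_vertex (p : ℕ) [Fact p.Prime]
    {T : Type} [TopologicalSpace T] [CompactSpace T] [T2Space T]
    [TotallyDisconnectedSpace T]
    (G : ProfGraph T) (htree : G.IsProPTree p)
    (Γ : Type) [Group Γ] [TopologicalSpace Γ] [IsTopologicalGroup Γ]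
    [CompactSpace Γ] [T2Space Γ] [TotallyDisconnectedSpace Γ]
    (hproP : ∀ V : OpenNormalSubgroup Γ, IsPGroup p (Γ ⧸ V.toSubgroup))
    [MulAction Γ T] (hcont : Continuous fun q : Γ × T => q.1 • q.2)
    (hd0 : ∀ (g : Γ) (x : T), G.d0 (g • x) = g • G.d0 x)
    (hd1 : ∀ (g : Γ) (x : T), G.d1 (g • x) = g • G.d1 x)
    (U : Subgroup Γ)
    (hU : ∃ u : Γ, U = (Subgroup.zpowers u).topologicalClosure)
    (hnoedge : ∀ e : T, ¬ G.IsVertex e → ∃ u ∈ U, u • e ≠ e)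
    (v : T) (hv : G.IsVertex v) (hfixv : ∀ u ∈ U, u • v = v) :
    ∀ n ∈ Subgroup.normalizer (U : Set Γ), n • v = v :=
  normalizer_fixes_vertex_general p G htree Γ hproP hcont hd0 hd1 U hU hnoedge v hv hfixv
end
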